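/- arXiv:2312.15366 — 4 statements merged into one kernel-verified Lean document; each statement's English description precedes it below -/
import Mathlib

section
/- Let n ≥ 1, m ≥ 1, p ≥ 0, q ≥ 0 with p + q > 1, and r ≥ 0, s ≥ 0 be integers, and for such parameters define G(n,p,q,r,s,m) := ∑_{j=1}^{n} H_{j,m} / ((j+r)^p (j+s)^q) (a real number). Then the following recursive relations hold. (i) If q = 0, then G(n,p,0,r,s,m) = ∑_{j=1}^{n+r} H_{j,m}/j^p − ∑_{j=1}^{r} H_{j,m}/j^p − ∑_{i=1}^{r} ∑_{j=1}^{n} 1/((j+i)^m (j+r)^p). (ii) If p > q and r ≠ s, then G(n,p,q,r,s,m) = (1/(s−r)^q) ∑_{i=0}^{q} (−1)^i binom(q,i) G(n,p−i,i,r,s,m). (iii) If q > p and r ≠ s, then G(n,p,q,r,s,m) = (1/(r−s)^p) ∑_{i=0}^{p} (−1)^i binom(p,i) G(n,i,q−i,r,s,m). -/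
open Finset Filter Real Topology

/-- Generalized harmonic number `H (n, m) = ∑_{i=1}^{n} 1/i^m` as a real number. -/
noncomputable def H (n m : ℕ) : ℝ := ∑ i ∈ Finset.Icc 1 n, (1 : ℝ) / (i : ℝ) ^ m

/-- Apéry's constant `ζ(3) = ∑_{k=1}^{∞} 1/k³`. -/
noncomputable def zeta3 : ℝ := ∑' k : ℕ, 1 / ((k : ℝ) + 1) ^ 3

/-- `G (n,p,q,r,s,m) = ∑_{j=1}^{n} H_{j,m} / ((j+r)^p (j+s)^q)`. -/
noncomputable def G (n p q r s m : ℕ) : ℝ :=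
  ∑ j ∈ Finset.Icc 1 n, H j m / (((j : ℝ) + r) ^ p * ((j : ℝ) + s) ^ q)

lemma key (a b : ℝ) (ha : a ≠ 0) (hb : b ≠ 0) (hab : b - a ≠ 0) {p q : ℕ} (hqp : q ≤ p) :
    (1:ℝ)/(a^p * b^q) = (1/(b-a)^q) *
      ∑ i ∈ range (q+1), (-1:ℝ)^i * (q.choose i : ℝ) * (1/(a^(p-i) * b^i)) := by
  have h1 : ∀ i ∈ range (q+1),
      (-1:ℝ)^i * (q.choose i : ℝ) * (1/(a^(p-i) * b^i))
        = ((-a/b)^i * (1:ℝ)^(q-i) * (q.choose i : ℝ)) / a^p := by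
    intro i hi
    have hiq : i ≤ q := Nat.lt_succ_iff.mp (mem_range.mp hi)
    rw [pow_sub₀ a ha (hiq.trans hqp), div_pow, neg_pow]
    field_simp
    ring
  rw [Finset.sum_congr rfl h1, ← Finset.sum_div, ← add_pow]
  have h2 : -a/b + 1 = (b-a)/b := by field_simp; ring
  rw [h2, div_pow]
  field_simp

lemma Hsplit (j r m : ℕ) :
    H (r + j) m = H j m + ∑ i ∈ Finset.Icc 1 r, 1/(((j:ℝ))+(i:ℕ))^m := by
  have h : H (r + j) m = H (j + r) m := by rw [Nat.add_comm]
  rw [h]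
  show (∑ i ∈ Finset.Ioc 0 (j + r), (1:ℝ)/(i:ℝ)^m) = _
  rw [← Finset.sum_Ioc_consecutive _ (Nat.zero_le j) (Nat.le_add_right j r)]
  congr 1
  have hmap : Finset.Ioc j (j+r) = Finset.map (addLeftEmbedding j) (Finset.Ioc 0 r) := by
    rw [Finset.map_add_left_Ioc]; simp
  rw [hmap, Finset.sum_map]
  apply Finset.sum_congr rfl
  intro i hi
  simp [addLeftEmbedding]

theorem recursion_for_G (n p q r s m : ℕ) (hn : 1 ≤ n) (hm : 1 ≤ m) (hpq : 1 < p + q) :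
    (q = 0 →
      G n p 0 r s m =
        (∑ j ∈ Finset.Icc 1 (n + r), H j m / (j : ℝ) ^ p)
          - (∑ j ∈ Finset.Icc 1 r, H j m / (j : ℝ) ^ p)
          - ∑ i ∈ Finset.Icc 1 r, ∑ j ∈ Finset.Icc 1 n,
              1 / (((j : ℝ) + i) ^ m * ((j : ℝ) + r) ^ p)) ∧
    (p > q → r ≠ s →
      G n p q r s m =
        (1 / ((s : ℝ) - (r : ℝ)) ^ q) *
          ∑ i ∈ Finset.range (q + 1),
            (-1 : ℝ) ^ i * (q.choose i : ℝ) * G n (p - i) i r s m) ∧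
    (q > p → r ≠ s →
      G n p q r s m =
        (1 / ((r : ℝ) - (s : ℝ)) ^ p) *
          ∑ i ∈ Finset.range (p + 1),
            (-1 : ℝ) ^ i * (p.choose i : ℝ) * G n i (q - i) r s m) := by
  refine ⟨?_, ?_, ?_⟩
  · intro hq
    subst hq
    have key1 : (∑ j ∈ Finset.Icc 1 (n + r), H j m / (j : ℝ) ^ p)
        = (∑ j ∈ Finset.Icc 1 r, H j m / (j : ℝ) ^ p)
          + ∑ j ∈ Finset.Icc 1 n, H (r + j) m / ((r + j : ℕ) : ℝ) ^ p := by
      show (∑ j ∈ Finset.Ioc 0 (n + r), H j m / (j : ℝ) ^ p) = _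
      rw [Nat.add_comm n r, ← Finset.sum_Ioc_consecutive (fun j => H j m / (j:ℝ)^p)
        (Nat.zero_le r) (Nat.le_add_right r n)]
      congr 1
      have hmap : Finset.Ioc r (r+n) = Finset.map (addLeftEmbedding r) (Finset.Ioc 0 n) := by
        rw [Finset.map_add_left_Ioc]; simp
      rw [hmap, Finset.sum_map]
      rfl
    rw [key1]
    have key2 : ∑ j ∈ Finset.Icc 1 n, H (r + j) m / ((r + j : ℕ) : ℝ) ^ p
        = G n p 0 r s m + ∑ i ∈ Finset.Icc 1 r, ∑ j ∈ Finset.Icc 1 n,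
            1 / (((j : ℝ) + i) ^ m * ((j : ℝ) + r) ^ p) := by
      rw [G, Finset.sum_comm (t := Finset.Icc 1 n), ← Finset.sum_add_distrib]
      apply Finset.sum_congr rfl
      intro j hj
      rw [Hsplit, add_div, Finset.sum_div]
      push_cast
      congr 1
      · ring_nf
      · apply Finset.sum_congr rfl; intro i hi; rw [div_div]; ring_nf
    rw [key2]
    ring
  · intro hpq2 hrs
    have hpq := hpq2
    have main : ∀ j ∈ Finset.Icc 1 n,
        H j m / (((j:ℝ)+r)^p * ((j:ℝ)+s)^q)
          = 1/((s:ℝ)-(r:ℝ))^q * ∑ i ∈ Finset.range (q+1),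
              (-1:ℝ)^i * (q.choose i : ℝ) * (H j m / (((j:ℝ)+r)^(p-i) * ((j:ℝ)+s)^i)) := by
      intro j hj
      have hj1 : 1 ≤ j := (Finset.mem_Icc.mp hj).1
      have hjr : (1:ℝ) ≤ (j:ℝ) := by exact_mod_cast hj1
      have ha : ((j:ℝ)+r) ≠ 0 := by positivity
      have hb : ((j:ℝ)+s) ≠ 0 := by positivity
      have hab : ((j:ℝ)+s) - ((j:ℝ)+r) ≠ 0 := by
        have : (r:ℝ) ≠ (s:ℝ) := by exact_mod_cast hrs
        intro h; apply this; linarith [sub_eq_zero.mp h]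
      have hk := key ((j:ℝ)+r) ((j:ℝ)+s) ha hb hab hpq.le
      have hsr : ((j:ℝ)+s) - ((j:ℝ)+r) = (s:ℝ) - (r:ℝ) := by ring
      rw [hsr] at hk
      calc H j m / (((j:ℝ)+r)^p * ((j:ℝ)+s)^q)
          = H j m * (1/(((j:ℝ)+r)^p * ((j:ℝ)+s)^q)) := by ring
        _ = H j m * (1/((s:ℝ)-(r:ℝ))^q * ∑ i ∈ Finset.range (q+1),
              (-1:ℝ)^i * (q.choose i : ℝ) * (1/(((j:ℝ)+r)^(p-i) * ((j:ℝ)+s)^i))) := by rw [hk]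
        _ = _ := by
            rw [mul_left_comm, Finset.mul_sum]
            congr 1
            apply Finset.sum_congr rfl
            intro i hi; ring
    rw [G, Finset.sum_congr rfl main, ← Finset.mul_sum]
    congr 1
    rw [Finset.sum_comm]
    apply Finset.sum_congr rfl
    intro i hi
    rw [G, Finset.mul_sum]
  · intro hpq2 hrs
    have hpq := hpq2
    have main : ∀ j ∈ Finset.Icc 1 n,
        H j m / (((j:ℝ)+r)^p * ((j:ℝ)+s)^q)
          = 1/((r:ℝ)-(s:ℝ))^p * ∑ i ∈ Finset.range (p+1),
              (-1:ℝ)^i * (p.choose i : ℝ) * (H j m / (((j:ℝ)+r)^i * ((j:ℝ)+s)^(q-i))) := by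
      intro j hj
      have hj1 : 1 ≤ j := (Finset.mem_Icc.mp hj).1
      have hjr : (1:ℝ) ≤ (j:ℝ) := by exact_mod_cast hj1
      have ha : ((j:ℝ)+s) ≠ 0 := by positivity
      have hb : ((j:ℝ)+r) ≠ 0 := by positivity
      have hab : ((j:ℝ)+r) - ((j:ℝ)+s) ≠ 0 := by
        have : (r:ℝ) ≠ (s:ℝ) := by exact_mod_cast hrs
        intro h; apply this; linarith [sub_eq_zero.mp h]
      have hk := key ((j:ℝ)+s) ((j:ℝ)+r) ha hb hab hpq.le
      have hsr : ((j:ℝ)+r) - ((j:ℝ)+s) = (r:ℝ) - (s:ℝ) := by ring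
      rw [hsr] at hk
      calc H j m / (((j:ℝ)+r)^p * ((j:ℝ)+s)^q)
          = H j m * (1/(((j:ℝ)+s)^q * ((j:ℝ)+r)^p)) := by ring
        _ = H j m * (1/((r:ℝ)-(s:ℝ))^p * ∑ i ∈ Finset.range (p+1),
              (-1:ℝ)^i * (p.choose i : ℝ) * (1/(((j:ℝ)+s)^(q-i) * ((j:ℝ)+r)^i))) := by rw [hk]
        _ = _ := by
            rw [mul_left_comm, Finset.mul_sum]
            congr 1
            apply Finset.sum_congr rfl
            intro i hi; ring
    rw [G, Finset.sum_congr rfl main, ← Finset.mul_sum]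
    congr 1
    rw [Finset.sum_comm]
    apply Finset.sum_congr rfl
    intro i hi
    rw [G, Finset.mul_sum]
end

section
/- Let n ≥ 1, m ≥ 1, p ≥ 0, q ≥ 0 with p + q > 1, and r ≥ 0, s ≥ 0 be integers, and for such parameters define V(n,p,q,r,s,m) := ∑_{j=1}^{n} H_{j,m}^2 / ((j+r)^p (j+s)^q) (a real number). Then the following recursive relations hold. (i) If q = 0, then V(n,p,0,r,s,m) = ∑_{j=1}^{n+r} H_{j,m}^2/j^p − ∑_{j=1}^{r} H_{j,m}^2/j^p − 2 ∑_{i=1}^{r} ∑_{j=1}^{n} H_{j,m}/((j+r)^p (j+i)^m) + ∑_{i=1}^{r} ∑_{j=1}^{n} 1/((j+r)^p (j+i)^{2m}) − 2 ∑_{i=1}^{r} ∑_{k=1}^{r} ∑_{j=1}^{n} 1/((j+r)^p (j+i)^m (j+k)^m) + 2 ∑_{i₁=1}^{r−1} ∑_{i₂=i₁+1}^{r} ∑_{j=1}^{n} 1/((j+r)^p (j+i₁)^m (j+i₂)^m). (ii) If p > q and r ≠ s, then V(n,p,q,r,s,m) = (1/(s−r)^q) ∑_{i=0}^{q} (−1)^i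 binom(q,i) V(n,p−i,i,r,s,m). (iii) If q > p and r ≠ s, then V(n,p,q,r,s,m) = (1/(r−s)^p) ∑_{i=0}^{p} (−1)^i binom(p,i) V(n,i,q−i,r,s,m). -/
/-! Writing `u_j = ∑_{i=1}^{r} 1/(j+i)^m`, we have `H_{j+r,m} = H_{j,m} + u_j`, so
`H_{j,m}² = H_{j+r,m}² - 2 H_{j,m} u_j - u_j²`; expanding `u_j²` into its diagonal and
off-diagonal parts and summing over `j` gives (i), the first sum being reindexed by `j ↦ j + r`.
For (ii) and (iii), put `a = j + r`, `b = j + s`: since `b - a = s - r` does not depend on `j`,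
expanding `(b - a)^q / (a^p b^q)` binomially decomposes every summand of `V` into partial
fractions `± 1/(a^(p-i) b^i)`. Part (iii) is part (ii) with the roles of `r` and `s` exchanged. -/

open Finset Filter Real Topology

/-- `V (n,p,q,r,s,m) = ∑_{j=1}^{n} H_{j,m}² / ((j+r)^p (j+s)^q)`. -/
noncomputable def V (n p q r s m : ℕ) : ℝ :=
  ∑ j ∈ Finset.Icc 1 n, (H j m) ^ 2 / (((j : ℝ) + r) ^ p * ((j : ℝ) + s) ^ q)

lemma sum_Icc_add_sub_sum_Icc {M : Type*} [AddCommGroup M] (f : ℕ → M) (n r : ℕ) :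
    ∑ j ∈ Icc 1 (n + r), f j - ∑ j ∈ Icc 1 r, f j = ∑ j ∈ Icc 1 n, f (j + r) := by
  have hshift : ∑ j ∈ Icc 1 n, f (j + r) = ∑ j ∈ Ioc r (n + r), f j := by
    rw [← Icc_add_one_left_eq_Ioc, add_comm r, ← map_add_right_Icc, sum_map]
    rfl
  have hIcc (k : ℕ) : Icc 1 k = Ioc 0 k := Icc_add_one_left_eq_Ioc 0 k
  rw [hshift, hIcc, hIcc, sub_eq_iff_eq_add', sum_Ioc_consecutive _ (Nat.zero_le r) (by omega)]

lemma sq_sum_Icc {R : Type*} [CommSemiring R] (a : ℕ → R) (r : ℕ) :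
    (∑ i ∈ Icc 1 r, a i) ^ 2 =
      ∑ i ∈ Icc 1 r, a i ^ 2 + 2 * ∑ i ∈ Icc 1 (r - 1), ∑ k ∈ Icc (i + 1) r, a i * a k := by
  have hdrop : ∑ i ∈ Icc 1 (r - 1), ∑ k ∈ Icc (i + 1) r, a i * a k
      = ∑ i ∈ Icc 1 r, ∑ k ∈ Icc (i + 1) r, a i * a k := by
    refine sum_subset (Icc_subset_Icc_right (Nat.sub_le r 1)) fun i hi hi' => ?_
    rw [Icc_eq_empty (by simp at hi hi'; omega), sum_empty]
  rw [hdrop]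
  clear hdrop
  induction r with
  | zero => simp
  | succ r ih =>
    have hinner : ∀ i ∈ Icc 1 r, ∑ k ∈ Icc (i + 1) (r + 1), a i * a k
        = ∑ k ∈ Icc (i + 1) r, a i * a k + a i * a (r + 1) :=
      fun i hi => sum_Icc_succ_top (by simp at hi; omega) _
    rw [sum_Icc_succ_top (by omega), sum_Icc_succ_top (by omega), sum_Icc_succ_top (by omega),
      Icc_eq_empty (show ¬r + 1 + 1 ≤ r + 1 by omega), sum_empty, sum_congr rfl hinner,
      sum_add_distrib, ← sum_mul, add_sq, ih]
    ring

lemma div_pow_mul_pow_eq_sum_choose {K : Type*} [Field K] {a b : K} (ha : a ≠ 0) (hb : b ≠ 0)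
    (hab : a ≠ b) {p q : ℕ} (hqp : q ≤ p) (c : K) :
    c / (a ^ p * b ^ q) = 1 / (b - a) ^ q *
      ∑ i ∈ range (q + 1), (-1) ^ i * (q.choose i : K) * (c / (a ^ (p - i) * b ^ i)) := by
  have hterm : ∀ i ∈ range (q + 1), (-1) ^ i * (q.choose i : K) * (c / (a ^ (p - i) * b ^ i))
      = c / (a ^ p * b ^ q) * ((-a) ^ i * b ^ (q - i) * q.choose i) := by
    intro i hi
    have hiq : i ≤ q := Nat.lt_succ_iff.mp (mem_range.mp hi)
    rw [← pow_sub_mul_pow a (hiq.trans hqp), ← pow_mul_pow_sub b hiq]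
    field_simp
    ring
  rw [sum_congr rfl hterm, ← mul_sum, ← add_pow, neg_add_eq_sub]
  field_simp [sub_ne_zero.mpr hab.symm]

lemma H_add (j r m : ℕ) : H (j + r) m = H j m + ∑ i ∈ Icc 1 r, 1 / ((j : ℝ) + i) ^ m := by
  induction r with
  | zero => simp
  | succ r ih =>
    rw [← add_assoc, H, sum_Icc_succ_top (by omega), ← H, ih, sum_Icc_succ_top (by omega)]
    push_cast
    ring

lemma sq_H_div_eq (p r m j : ℕ) :
    H j m ^ 2 / ((j : ℝ) + r) ^ p =
      H (j + r) m ^ 2 / ((j : ℝ) + r) ^ p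
      - 2 * ∑ i ∈ Icc 1 r, H j m / (((j : ℝ) + r) ^ p * ((j : ℝ) + i) ^ m)
      + ∑ i ∈ Icc 1 r, 1 / (((j : ℝ) + r) ^ p * ((j : ℝ) + i) ^ (2 * m))
      - 2 * ∑ i ∈ Icc 1 r, ∑ k ∈ Icc 1 r,
          1 / (((j : ℝ) + r) ^ p * ((j : ℝ) + i) ^ m * ((j : ℝ) + k) ^ m)
      + 2 * ∑ i₁ ∈ Icc 1 (r - 1), ∑ i₂ ∈ Icc (i₁ + 1) r,
          1 / (((j : ℝ) + r) ^ p * ((j : ℝ) + i₁) ^ m * ((j : ℝ) + i₂) ^ m) := by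
  have hsq := sq_sum_Icc (fun i => (((j : ℝ) + i) ^ m)⁻¹) r
  rw [H_add]
  simp only [mul_inv, div_eq_mul_inv, pow_mul', inv_pow, mul_assoc, ← mul_sum, ← sum_mul] at hsq ⊢
  linear_combination (((j : ℝ) + r) ^ p)⁻¹ * hsq

lemma V_comm (n p q r s m : ℕ) : V n p q r s m = V n q p s r m := by
  simp only [V, mul_comm]

lemma V_eq_sum_choose (n m : ℕ) {p q r s : ℕ} (hqp : q ≤ p) (hrs : r ≠ s) :
    V n p q r s m = 1 / ((s : ℝ) - r) ^ q *
      ∑ i ∈ range (q + 1), (-1) ^ i * (q.choose i : ℝ) * V n (p - i) i r s m := by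
  simp only [V, mul_sum]
  rw [sum_comm]
  refine sum_congr rfl fun j hj => ?_
  have hj0 : (0 : ℝ) < j := by simp at hj; exact_mod_cast hj.1
  have hrs' : (j : ℝ) + r ≠ j + s := by simpa using hrs
  rw [div_pow_mul_pow_eq_sum_choose (by positivity) (by positivity) hrs' hqp,
    add_sub_add_left_eq_sub, mul_sum]

theorem recursion_for_V_general (n p q r s m : ℕ) :
    (q = 0 →
      V n p 0 r s m =
        (∑ j ∈ Finset.Icc 1 (n + r), (H j m) ^ 2 / (j : ℝ) ^ p)
          - (∑ j ∈ Finset.Icc 1 r, (H j m) ^ 2 / (j : ℝ) ^ p)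
          - 2 * ∑ i ∈ Finset.Icc 1 r, ∑ j ∈ Finset.Icc 1 n,
              H j m / (((j : ℝ) + r) ^ p * ((j : ℝ) + i) ^ m)
          + ∑ i ∈ Finset.Icc 1 r, ∑ j ∈ Finset.Icc 1 n,
              1 / (((j : ℝ) + r) ^ p * ((j : ℝ) + i) ^ (2 * m))
          - 2 * ∑ i ∈ Finset.Icc 1 r, ∑ k ∈ Finset.Icc 1 r, ∑ j ∈ Finset.Icc 1 n,
              1 / (((j : ℝ) + r) ^ p * ((j : ℝ) + i) ^ m * ((j : ℝ) + k) ^ m)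
          + 2 * ∑ i₁ ∈ Finset.Icc 1 (r - 1), ∑ i₂ ∈ Finset.Icc (i₁ + 1) r,
              ∑ j ∈ Finset.Icc 1 n,
              1 / (((j : ℝ) + r) ^ p * ((j : ℝ) + i₁) ^ m * ((j : ℝ) + i₂) ^ m)) ∧
    (p > q → r ≠ s →
      V n p q r s m =
        (1 / ((s : ℝ) - (r : ℝ)) ^ q) *
          ∑ i ∈ Finset.range (q + 1),
            (-1 : ℝ) ^ i * (q.choose i : ℝ) * V n (p - i) i r s m) ∧
    (q > p → r ≠ s →
      V n p q r s m =
        (1 / ((r : ℝ) - (s : ℝ)) ^ p) *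
          ∑ i ∈ Finset.range (p + 1),
            (-1 : ℝ) ^ i * (p.choose i : ℝ) * V n i (q - i) r s m) := by
  refine ⟨fun _ => ?_, fun hqp hrs => V_eq_sum_choose n m hqp.le hrs, fun hpq hrs => ?_⟩
  · rw [sum_Icc_add_sub_sum_Icc (fun j => H j m ^ 2 / (j : ℝ) ^ p)]
    simp only [V, pow_zero, mul_one, sq_H_div_eq p r m, sum_add_distrib, sum_sub_distrib,
      ← mul_sum, Nat.cast_add, sum_comm (s := Icc 1 n)]
  · rw [V_comm, V_eq_sum_choose n m hpq.le hrs.symm]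
    refine congrArg _ (sum_congr rfl fun i _ => ?_)
    rw [V_comm]

theorem recursion_for_V (n p q r s m : ℕ) (hn : 1 ≤ n) (hm : 1 ≤ m) (hpq : 1 < p + q) :
    (q = 0 →
      V n p 0 r s m =
        (∑ j ∈ Finset.Icc 1 (n + r), (H j m) ^ 2 / (j : ℝ) ^ p)
          - (∑ j ∈ Finset.Icc 1 r, (H j m) ^ 2 / (j : ℝ) ^ p)
          - 2 * ∑ i ∈ Finset.Icc 1 r, ∑ j ∈ Finset.Icc 1 n,
              H j m / (((j : ℝ) + r) ^ p * ((j : ℝ) + i) ^ m)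
          + ∑ i ∈ Finset.Icc 1 r, ∑ j ∈ Finset.Icc 1 n,
              1 / (((j : ℝ) + r) ^ p * ((j : ℝ) + i) ^ (2 * m))
          - 2 * ∑ i ∈ Finset.Icc 1 r, ∑ k ∈ Finset.Icc 1 r, ∑ j ∈ Finset.Icc 1 n,
              1 / (((j : ℝ) + r) ^ p * ((j : ℝ) + i) ^ m * ((j : ℝ) + k) ^ m)
          + 2 * ∑ i₁ ∈ Finset.Icc 1 (r - 1), ∑ i₂ ∈ Finset.Icc (i₁ + 1) r,
              ∑ j ∈ Finset.Icc 1 n,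
              1 / (((j : ℝ) + r) ^ p * ((j : ℝ) + i₁) ^ m * ((j : ℝ) + i₂) ^ m)) ∧
    (p > q → r ≠ s →
      V n p q r s m =
        (1 / ((s : ℝ) - (r : ℝ)) ^ q) *
          ∑ i ∈ Finset.range (q + 1),
            (-1 : ℝ) ^ i * (q.choose i : ℝ) * V n (p - i) i r s m) ∧
    (q > p → r ≠ s →
      V n p q r s m =
        (1 / ((r : ℝ) - (s : ℝ)) ^ p) *
          ∑ i ∈ Finset.range (p + 1),
            (-1 : ℝ) ^ i * (p.choose i : ℝ) * V n i (q - i) r s m) :=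
  recursion_for_V_general n p q r s m
end

section
/- For every integer n ≥ 1: (i) ∑_{j=1}^{n} H_{j,1}/(j+1) = (1/2)(H_{n+1,1}^2 − H_{n+1,2}); and (ii) for every integer m ≥ 2, ∑_{j=1}^{n} H_{j,1}/(j+m) = ∑_{j=1}^{n} H_{j,1}/(j+m−1) + (1/(m−1)) ∑_{j=n+2}^{n+m} 1/j − H_{m,1}/(m−1) + 1/(m(m−1)) + H_{n+1,1}/(n+m). -/
open Finset Filter Real Topology

lemma Hsucc (n m : ℕ) : H (n + 1) m = H n m + 1 / ((n : ℝ) + 1) ^ m := by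
  unfold H
  rw [Finset.sum_Icc_succ_top (by omega : 1 ≤ n + 1)]
  push_cast
  ring

lemma Hsplit_s3 (a b : ℕ) (h : a ≤ b) (f : ℕ → ℝ) :
    ∑ j ∈ Finset.Icc 1 b, f j = ∑ j ∈ Finset.Icc 1 a, f j + ∑ j ∈ Finset.Icc (a + 1) b, f j := by
  rw [← Finset.Ico_add_one_right_eq_Icc, ← Finset.Ico_add_one_right_eq_Icc, ← Finset.Ico_add_one_right_eq_Icc,
    Finset.sum_Ico_consecutive _ (by omega) (by omega)]

lemma Tsum (n m : ℕ) (hm : 1 ≤ m) :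
    ∑ j ∈ Finset.Icc (n + 2) (n + m), (1 : ℝ) / (j : ℝ) = H (n + m) 1 - H (n + 1) 1 := by
  have h := Hsplit_s3 (n + 1) (n + m) (by omega) (fun j => (1 : ℝ) / (j : ℝ))
  unfold H
  simp only [pow_one] at h ⊢
  linarith

lemma H11 : H 1 1 = 1 := by simp [H]
lemma H12 : H 1 2 = 1 := by simp [H]
lemma H21 : H 2 1 = 3 / 2 := by
  have h := Hsucc 1 1; norm_num [H11] at h; linarith
lemma H22 : H 2 2 = 5 / 4 := by
  have h := Hsucc 1 2; norm_num [H12] at h; linarith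

theorem sum_H1_div_shift :
    (∀ n : ℕ, 1 ≤ n →
      ∑ j ∈ Finset.Icc 1 n, H j 1 / ((j : ℝ) + 1) =
        (1 / 2) * ((H (n + 1) 1) ^ 2 - H (n + 1) 2)) ∧
    (∀ n : ℕ, 1 ≤ n → ∀ m : ℕ, 2 ≤ m →
      ∑ j ∈ Finset.Icc 1 n, H j 1 / ((j : ℝ) + m) =
        (∑ j ∈ Finset.Icc 1 n, H j 1 / ((j : ℝ) + m - 1))
          + (1 / ((m : ℝ) - 1)) * ∑ j ∈ Finset.Icc (n + 2) (n + m), (1 : ℝ) / (j : ℝ)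
          - H m 1 / ((m : ℝ) - 1) + 1 / ((m : ℝ) * ((m : ℝ) - 1))
          + H (n + 1) 1 / ((n : ℝ) + m)) := by
  constructor
  · intro n hn
    induction n, hn using Nat.le_induction with
    | base => simp [H11, H21, H22]; norm_num
    | succ n hn ih =>
      have h2 : ((n : ℝ) + 1 + 1) ≠ 0 := by positivity
      rw [Finset.sum_Icc_succ_top (by omega : 1 ≤ n + 1), ih, Hsucc (n + 1) 1, Hsucc (n + 1) 2]
      push_cast
      field_simp
      ring
  · intro n hn m hm
    have hm0 : (m : ℝ) ≠ 0 := by positivity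
    have hm2 : (2 : ℝ) ≤ (m : ℝ) := by exact_mod_cast hm
    have hm1 : (m : ℝ) - 1 ≠ 0 := by linarith
    induction n, hn using Nat.le_induction with
    | base =>
      rw [Tsum 1 m (by omega), show (1 : ℕ) + m = m + 1 from by omega, Hsucc m 1]
      have hm1' : (m : ℝ) + 1 ≠ 0 := by positivity
      simp only [show (1 : ℕ) + 1 = 2 from rfl, Finset.Icc_self, Finset.sum_singleton,
        H11, H21, Nat.cast_one, pow_one]
      field_simp
      ring_nf
      field_simp
      ring
    | succ n hn ih =>
      rw [Finset.sum_Icc_succ_top (by omega : 1 ≤ n + 1),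
        Finset.sum_Icc_succ_top (by omega : 1 ≤ n + 1), ih,
        Tsum n m (by omega), Tsum (n + 1) m (by omega),
        show n + 1 + m = (n + m) + 1 from by ring, Hsucc (n + m) 1,
        Hsucc (n + 1) 1]
      push_cast
      have key : H (n + 1) 1 / ((n : ℝ) + 1 + (m : ℝ)) =
          (1 / ((m : ℝ) - 1)) * (1 / ((n : ℝ) + (m : ℝ) + 1) - 1 / ((n : ℝ) + 1 + 1))
            + (H (n + 1) 1 + 1 / ((n : ℝ) + 1 + 1)) / ((n : ℝ) + 1 + (m : ℝ)) := by
        have h1 : ((n : ℝ) + 1 + 1) ≠ 0 := by positivity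
        have h2 : ((n : ℝ) + (m : ℝ) + 1) ≠ 0 := by positivity
        have h3 : ((n : ℝ) + 1 + (m : ℝ)) ≠ 0 := by positivity
        field_simp
        ring
      linear_combination key
end

section
/- For every integer n ≥ 1: (i) ∑_{j=1}^{n} H_{j,2}/(j+1) = H_{n+1,1} H_{n+1,2} − ∑_{j=1}^{n+1} H_{j,1}/j^2; and (ii) for every integer m ≥ 2, ∑_{j=1}^{n} H_{j,2}/(j+m) = ∑_{j=1}^{n} H_{j,2}/(j+m−1) − 1/(m(m−1)^2) − H_{n+1,2}/(m−1) + H_{m,1}/(m−1)^2 + H_{n+1,2}/(n+m) − (1/(m−1)^2) ∑_{j=n+2}^{n+m} 1/j. -/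
open Finset Filter Real Topology

lemma H_succ (n m : ℕ) : H (n+1) m = H n m + 1/((n:ℝ)+1)^m := by
  unfold H
  rw [Finset.sum_Icc_succ_top (by omega : 1 ≤ n + 1)]
  push_cast; ring

lemma tail_base {m : ℕ} (hm : 2 ≤ m) :
    ∑ j ∈ Finset.Icc 3 (m+1), (1:ℝ)/(j:ℝ) = H m 1 + 1/((m:ℝ)+1) - 3/2 := by
  have h1 : H (m+1) 1 = H m 1 + 1/((m:ℝ)+1) := by
    simpa using H_succ m 1
  have h2 : ∑ j ∈ (Finset.Ioc 0 2 : Finset ℕ), (1:ℝ)/(j:ℝ) + ∑ j ∈ Finset.Ioc 2 (m+1), (1:ℝ)/(j:ℝ)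
      = ∑ j ∈ Finset.Ioc 0 (m+1), (1:ℝ)/(j:ℝ) :=
    Finset.sum_Ioc_consecutive _ (by omega) (by omega)
  have h3 : H (m+1) 1 = ∑ j ∈ Finset.Ioc 0 (m+1), (1:ℝ)/(j:ℝ) := by
    unfold H
    rw [← Finset.Icc_add_one_left_eq_Ioc]
    simp
  have h4 : (Finset.Ioc 0 2 : Finset ℕ) = {1, 2} := by decide
  have h5 : (Finset.Ioc 2 (m+1) : Finset ℕ) = Finset.Icc 3 (m+1) := (Finset.Icc_add_one_left_eq_Ioc 2 (m+1)).symm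
  rw [h4, h5] at h2
  norm_num at h2
  simp only [one_div] at h3 ⊢
  rw [← h2, h1] at h3
  simp only [one_div] at h3
  linarith

lemma tail_step (n m : ℕ) (hm : 2 ≤ m) :
    ∑ j ∈ Finset.Icc (n+3) (n+m+1), (1:ℝ)/(j:ℝ)
      = ∑ j ∈ Finset.Icc (n+2) (n+m), (1:ℝ)/(j:ℝ) + 1/((n:ℝ)+(m:ℝ)+1) - 1/((n:ℝ)+2) := by
  have e1 : (Finset.Icc (n+3) (n+m+1) : Finset ℕ) = Finset.Ioc (n+2) (n+m+1) :=
    Finset.Icc_add_one_left_eq_Ioc _ _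
  have e2 : (Finset.Icc (n+2) (n+m) : Finset ℕ) = Finset.Ioc (n+1) (n+m) :=
    Finset.Icc_add_one_left_eq_Ioc _ _
  rw [e1, e2]
  have h2 := Finset.sum_Ioc_consecutive (fun j : ℕ => (1:ℝ)/(j:ℝ))
    (show n+1 ≤ n+2 by omega) (show n+2 ≤ n+m+1 by omega)
  have h3 : ∑ j ∈ Finset.Ioc (n+1) (n+m+1), (1:ℝ)/(j:ℝ)
      = ∑ j ∈ Finset.Ioc (n+1) (n+m), (1:ℝ)/(j:ℝ) + 1/((n:ℝ)+(m:ℝ)+1) := by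
    rw [Finset.sum_Ioc_succ_top (show n+1 ≤ n+m by omega)]
    push_cast; ring
  have h4 : ∑ j ∈ Finset.Ioc (n+1) (n+2), (1:ℝ)/(j:ℝ) = 1/((n:ℝ)+2) := by
    rw [Nat.Ioc_succ_singleton, Finset.sum_singleton]
    push_cast; ring
  linarith [h2, h3, h4]

lemma part1 : ∀ n : ℕ, 1 ≤ n →
      ∑ j ∈ Finset.Icc 1 n, H j 2 / ((j : ℝ) + 1) =
        H (n + 1) 1 * H (n + 1) 2 - ∑ j ∈ Finset.Icc 1 (n + 1), H j 1 / (j : ℝ) ^ 2 := by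
  intro n hn
  induction n, hn using Nat.le_induction with
  | base =>
    have i1 : (Finset.Icc 1 1 : Finset ℕ) = {1} := rfl
    have i2 : (Finset.Icc 1 2 : Finset ℕ) = {1, 2} := rfl
    norm_num [H, i1, i2]
  | succ n hn ih =>
    rw [Finset.sum_Icc_succ_top (show (1:ℕ) ≤ n+1 by omega),
        Finset.sum_Icc_succ_top (show (1:ℕ) ≤ n+1+1 by omega), ih,
        H_succ (n+1) 1, H_succ (n+1) 2]
    have hne : ((n:ℝ)+2) ≠ 0 := by positivity
    push_cast
    field_simp
    ring

lemma part2 : ∀ n : ℕ, 1 ≤ n → ∀ m : ℕ, 2 ≤ m →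
      ∑ j ∈ Finset.Icc 1 n, H j 2 / ((j : ℝ) + m) =
        (∑ j ∈ Finset.Icc 1 n, H j 2 / ((j : ℝ) + m - 1))
          - 1 / ((m : ℝ) * ((m : ℝ) - 1) ^ 2)
          - H (n + 1) 2 / ((m : ℝ) - 1) + H m 1 / ((m : ℝ) - 1) ^ 2
          + H (n + 1) 2 / ((n : ℝ) + m)
          - (1 / ((m : ℝ) - 1) ^ 2) * ∑ j ∈ Finset.Icc (n + 2) (n + m), (1 : ℝ) / (j : ℝ) := by
  intro n hn m hm
  have h2m : (2:ℝ) ≤ (m:ℝ) := by exact_mod_cast hm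
  have hm0 : (m:ℝ) ≠ 0 := by positivity
  have hm1 : (m:ℝ) - 1 ≠ 0 := by
    intro h; nlinarith
  have hmp1 : (m:ℝ) + 1 ≠ 0 := by positivity
  induction n, hn using Nat.le_induction with
  | base =>
    rw [show (1+2 : ℕ) = 3 by omega, show (1+m : ℕ) = m+1 by omega, tail_base hm]
    have i1 : (Finset.Icc 1 1 : Finset ℕ) = {1} := rfl
    have hH1 : H 1 2 = 1 := by norm_num [H, i1]
    have hH2 : H 2 2 = 5/4 := by
      norm_num [H, show (Finset.Icc 1 2 : Finset ℕ) = {1, 2} from rfl]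
    rw [i1]
    simp only [Finset.sum_singleton, hH1]
    norm_num [hH2]
    field_simp
    ring
  | succ n hn ih =>
    have hn2 : ((n:ℝ)+2) ≠ 0 := by positivity
    have hnm : ((n:ℝ)+(m:ℝ)) ≠ 0 := by positivity
    have hnm1 : ((n:ℝ)+(m:ℝ)+1) ≠ 0 := by positivity
    rw [show (n+1+2 : ℕ) = n+3 by omega, show (n+1+m : ℕ) = n+m+1 by omega,
        tail_step n m hm,
        Finset.sum_Icc_succ_top (show (1:ℕ) ≤ n+1 by omega),
        Finset.sum_Icc_succ_top (show (1:ℕ) ≤ n+1 by omega)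
          (fun j : ℕ => H j 2 / ((j : ℝ) + m - 1)),
        ih, H_succ (n+1) 2]
    push_cast
    rw [show ((n:ℝ)+1+(m:ℝ)-1) = (n:ℝ)+(m:ℝ) by ring]
    field_simp
    ring

theorem sum_H2_div_shift :
    (∀ n : ℕ, 1 ≤ n →
      ∑ j ∈ Finset.Icc 1 n, H j 2 / ((j : ℝ) + 1) =
        H (n + 1) 1 * H (n + 1) 2 - ∑ j ∈ Finset.Icc 1 (n + 1), H j 1 / (j : ℝ) ^ 2) ∧
    (∀ n : ℕ, 1 ≤ n → ∀ m : ℕ, 2 ≤ m →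
      ∑ j ∈ Finset.Icc 1 n, H j 2 / ((j : ℝ) + m) =
        (∑ j ∈ Finset.Icc 1 n, H j 2 / ((j : ℝ) + m - 1))
          - 1 / ((m : ℝ) * ((m : ℝ) - 1) ^ 2)
          - H (n + 1) 2 / ((m : ℝ) - 1) + H m 1 / ((m : ℝ) - 1) ^ 2
          + H (n + 1) 2 / ((n : ℝ) + m)
          - (1 / ((m : ℝ) - 1) ^ 2) * ∑ j ∈ Finset.Icc (n + 2) (n + m), (1 : ℝ) / (j : ℝ)) := by
  exact ⟨part1, part2⟩
end
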